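/- arXiv:2510.01349 — 6 statements merged into one kernel-verified Lean document; each statement's English description precedes it below -/
import Mathlib

section
/- Let G be a finite group, ρ : G → GL(d, ℝ) an orthogonal representation, P₀ = (1/|G|) ∑_{g∈G} ρ(g), and let Σ̂ be a real symmetric positive semidefinite d×d matrix. Set Σ̂_aug = (1/|G|) ∑_{g∈G} ρ(g) Σ̂ ρ(g)ᵀ and Σ̂_inv = P₀ Σ̂ P₀. Then for every λ > 0 and every vector v ∈ ℝ^d with P₀ v = v, the matrices Σ̂_aug + λI and Σ̂_inv + λI are invertible and (Σ̂_aug + λI)⁻¹ v = (Σ̂_inv + λI)⁻¹ v. (This is the equivalence of data augmentation and training on invariant features for ridge regression.) -/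
open Matrix

private lemma psd_smul' {n : ℕ} {c : ℝ} (hc : 0 ≤ c) {A : Matrix (Fin n) (Fin n) ℝ}
    (hA : A.PosSemidef) : (c • A).PosSemidef := by
  refine ⟨?_, fun x => ?_⟩
  · rw [Matrix.IsHermitian, Matrix.conjTranspose_smul, star_trivial, hA.1.eq]
  · exact (hA.smul hc).2 x


/-- For a finite group `G` with orthogonal representation `ρ`,
averaging operator `P₀`, and a symmetric PSD matrix `Σ̂`, set
`Σ̂_aug = (1/|G|) ∑ g, ρ(g) Σ̂ ρ(g)ᵀ` and `Σ̂_inv = P₀ Σ̂ P₀`. Then for every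
`λ > 0` and every `v` with `P₀ v = v`, both `Σ̂_aug + λI` and `Σ̂_inv + λI`
are invertible and `(Σ̂_aug + λI)⁻¹ v = (Σ̂_inv + λI)⁻¹ v`. -/
theorem augmentation_eq_invariant_features {d : ℕ} {G : Type*} [Group G] [Fintype G]
    (ρ : G →* Matrix.GeneralLinearGroup (Fin d) ℝ)
    (horth : ∀ g : G, ((ρ g)⁻¹ : Matrix (Fin d) (Fin d) ℝ) =
      ((ρ g : Matrix (Fin d) (Fin d) ℝ))ᵀ)
    (P₀ : Matrix (Fin d) (Fin d) ℝ)
    (hP₀ : P₀ = ((Fintype.card G : ℝ))⁻¹ • ∑ g : G, (ρ g : Matrix (Fin d) (Fin d) ℝ))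
    (Shat : Matrix (Fin d) (Fin d) ℝ) (hShat : Shat.PosSemidef)
    (Saug Sinv : Matrix (Fin d) (Fin d) ℝ)
    (hSaug : Saug = ((Fintype.card G : ℝ))⁻¹ •
      ∑ g : G, (ρ g : Matrix (Fin d) (Fin d) ℝ) * Shat * ((ρ g : Matrix (Fin d) (Fin d) ℝ))ᵀ)
    (hSinv : Sinv = P₀ * Shat * P₀)
    (lam : ℝ) (hlam : 0 < lam)
    (v : Fin d → ℝ) (hv : P₀ *ᵥ v = v) :
    IsUnit (Saug + lam • (1 : Matrix (Fin d) (Fin d) ℝ)) ∧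
    IsUnit (Sinv + lam • (1 : Matrix (Fin d) (Fin d) ℝ)) ∧
    (Saug + lam • (1 : Matrix (Fin d) (Fin d) ℝ))⁻¹ *ᵥ v =
      (Sinv + lam • (1 : Matrix (Fin d) (Fin d) ℝ))⁻¹ *ᵥ v := by
  have hcard : (0 : ℝ) < (Fintype.card G : ℝ) := by exact_mod_cast Fintype.card_pos
  have hcne : (Fintype.card G : ℝ) ≠ 0 := hcard.ne'
  have hinv : ∀ g : G, ((ρ g⁻¹ : Matrix (Fin d) (Fin d) ℝ))
      = ((ρ g : Matrix (Fin d) (Fin d) ℝ))ᵀ := by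
    intro g
    rw [map_inv, Matrix.coe_units_inv, horth]
  have hmul : ∀ g h : G, (ρ g : Matrix (Fin d) (Fin d) ℝ) * (ρ h : Matrix (Fin d) (Fin d) ℝ)
      = ((ρ (g * h) : Matrix (Fin d) (Fin d) ℝ)) := by
    intro g h
    rw [_root_.map_mul, Units.val_mul]
  -- multiplication by ρ h preserves P₀
  have hmulP : ∀ h : G, (ρ h : Matrix (Fin d) (Fin d) ℝ) * P₀ = P₀ := by
    intro h
    rw [hP₀, Matrix.mul_smul, Finset.mul_sum]
    congr 1
    simp_rw [hmul]
    exact Fintype.sum_equiv (Equiv.mulLeft h) _ _ (fun g => rfl)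
  have hPmul : ∀ h : G, P₀ * (ρ h : Matrix (Fin d) (Fin d) ℝ) = P₀ := by
    intro h
    rw [hP₀, Matrix.smul_mul, Finset.sum_mul]
    congr 1
    simp_rw [hmul]
    exact Fintype.sum_equiv (Equiv.mulRight h) _ _ (fun g => rfl)
  have hsuminv : ∑ g : G, ((ρ g⁻¹ : Matrix (Fin d) (Fin d) ℝ))
      = ∑ g : G, ((ρ g : Matrix (Fin d) (Fin d) ℝ)) :=
    Fintype.sum_equiv (Equiv.inv G) _ _ (fun g => by simp)
  -- P₀ is idempotent
  have hPP : P₀ * P₀ = P₀ := by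
    nth_rewrite 1 [hP₀]
    rw [Matrix.smul_mul, Finset.sum_mul]
    simp_rw [hmulP]
    rw [Finset.sum_const, Finset.card_univ, ← Nat.cast_smul_eq_nsmul ℝ, smul_smul,
      inv_mul_cancel₀ hcne, one_smul]
  -- Saug * P₀ = Sinv and P₀ * Saug = Sinv
  have hSaugP : Saug * P₀ = Sinv := by
    rw [hSaug, Matrix.smul_mul, Finset.sum_mul]
    simp_rw [Matrix.mul_assoc, ← hinv, hmulP, ← Matrix.mul_assoc]
    rw [← Finset.sum_mul, ← Finset.sum_mul, ← Matrix.smul_mul, ← Matrix.smul_mul, ← hP₀, hSinv]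
  have hPSinv : P₀ * Sinv = Sinv := by
    rw [hSinv, ← Matrix.mul_assoc, ← Matrix.mul_assoc, hPP]
  have hPT : P₀ᵀ = P₀ := by
    rw [hP₀, Matrix.transpose_smul, Matrix.transpose_sum]
    congr 1
    simp_rw [← hinv]
    exact hsuminv
  -- positive semidefiniteness
  have hSaugPSD : Saug.PosSemidef := by
    rw [hSaug]
    refine psd_smul' (by positivity) ?_
    refine Finset.sum_induction _ _ (fun a b ha hb => ha.add hb) Matrix.PosSemidef.zero
      (fun g _ => ?_)
    have := hShat.mul_mul_conjTranspose_same (ρ g : Matrix (Fin d) (Fin d) ℝ)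
    rwa [Matrix.conjTranspose_eq_transpose_of_trivial] at this
  have hSinvPSD : Sinv.PosSemidef := by
    rw [hSinv]
    have := hShat.mul_mul_conjTranspose_same P₀
    rwa [Matrix.conjTranspose_eq_transpose_of_trivial, hPT] at this
  have hSaugT : Saugᵀ = Saug := by
    rw [← Matrix.conjTranspose_eq_transpose_of_trivial]
    exact hSaugPSD.1
  have hSinvT : Sinvᵀ = Sinv := by
    rw [← Matrix.conjTranspose_eq_transpose_of_trivial]
    exact hSinvPSD.1
  have hPSaug : P₀ * Saug = Sinv := by
    have h := congrArg Matrix.transpose hSaugP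
    rwa [Matrix.transpose_mul, hPT, hSaugT, hSinvT] at h
  have hlamPD : (lam • (1 : Matrix (Fin d) (Fin d) ℝ)).PosDef := by
    rw [Matrix.smul_one_eq_diagonal]
    exact Matrix.posDef_diagonal_iff.mpr (fun _ => hlam)
  have hA : (Saug + lam • (1 : Matrix (Fin d) (Fin d) ℝ)).PosDef :=
    Matrix.PosDef.posSemidef_add hSaugPSD hlamPD
  have hB : (Sinv + lam • (1 : Matrix (Fin d) (Fin d) ℝ)).PosDef :=
    Matrix.PosDef.posSemidef_add hSinvPSD hlamPD
  refine ⟨hA.isUnit, hB.isUnit, ?_⟩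
  set A := Saug + lam • (1 : Matrix (Fin d) (Fin d) ℝ)
  set B := Sinv + lam • (1 : Matrix (Fin d) (Fin d) ℝ)
  set w := B⁻¹ *ᵥ v with hw
  have hBdet : IsUnit B.det := (Matrix.isUnit_iff_isUnit_det B).mp hB.isUnit
  have hAdet : IsUnit A.det := (Matrix.isUnit_iff_isUnit_det A).mp hA.isUnit
  have hBw : B *ᵥ w = v := by
    rw [hw, Matrix.mulVec_mulVec, Matrix.mul_nonsing_inv B hBdet, Matrix.one_mulVec]
  have hPw : P₀ *ᵥ w = w := by
    have h1 : P₀ *ᵥ (B *ᵥ w) = P₀ *ᵥ v := by rw [hBw]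
    rw [hv, Matrix.mulVec_mulVec] at h1
    have hPB : P₀ * B = Sinv + lam • P₀ := by
      rw [Matrix.mul_add, hPSinv, Matrix.mul_smul, Matrix.mul_one]
    rw [hPB, Matrix.add_mulVec, Matrix.smul_mulVec] at h1
    have h2 : B *ᵥ w = Sinv *ᵥ w + lam • w := by
      rw [Matrix.add_mulVec, Matrix.smul_mulVec, Matrix.one_mulVec]
    rw [h2] at hBw
    have := h1.trans hBw.symm
    have h3 : lam • (P₀ *ᵥ w) = lam • w := by
      have := add_left_cancel this
      exact this
    exact smul_right_injective _ hlam.ne' h3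
  have hAw : A *ᵥ w = v := by
    have h2 : Saug *ᵥ w = Sinv *ᵥ w := by
      conv_lhs => rw [← hPw, Matrix.mulVec_mulVec, hSaugP]
    have h3 : A *ᵥ w = B *ᵥ w := by
      show (Saug + lam • (1 : Matrix (Fin d) (Fin d) ℝ)) *ᵥ w
          = (Sinv + lam • (1 : Matrix (Fin d) (Fin d) ℝ)) *ᵥ w
      rw [Matrix.add_mulVec, Matrix.add_mulVec, h2]
    rw [h3, hBw]
  rw [← hAw, Matrix.mulVec_mulVec, Matrix.nonsing_inv_mul A hAdet, Matrix.one_mulVec]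
end

section
/- Let (Ω, μ) be a probability space and G a finite group acting measurably on Ω such that each map x ↦ g·x is measure-preserving for μ. Let f : Ω → ℝ be square-integrable with symmetrization f̄(x) = (1/|G|) ∑_{g∈G} f(g·x), and let f* be a square-integrable G-invariant function (f*(g·x) = f*(x) for all g and μ-a.e. x). Then ∫ (f − f*)² dμ − ∫ (f̄ − f*)² dμ = ∫ (f − f̄)² dμ ≥ 0. In particular, when the data distribution is invariant, symmetrizing any predictor never increases the excess risk. -/
open MeasureTheory

/-- Let `G` be a finite group acting measurably and
measure-preservingly on a probability space `(Ω, μ)`, `f` square-integrable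
with symmetrization `f̄(x) = (1/|G|) ∑_g f(g·x)`, and `f*` a square-integrable
`G`-invariant function. Then
`∫ (f − f*)² dμ − ∫ (f̄ − f*)² dμ = ∫ (f − f̄)² dμ ≥ 0`: symmetrizing any
predictor never increases the excess risk when the data distribution is
invariant. -/
theorem symmetrization_never_increases_risk
    {Ω : Type*} [MeasurableSpace Ω] (μ : Measure Ω) [IsProbabilityMeasure μ]
    {G : Type*} [Group G] [Fintype G] [MulAction G Ω]
    (hact : ∀ g : G, MeasurePreserving (fun x : Ω => g • x) μ μ)
    (f : Ω → ℝ) (hf : MemLp f 2 μ)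
    (fstar : Ω → ℝ) (hfstar : MemLp fstar 2 μ)
    (hinv : ∀ g : G, ∀ᵐ x ∂μ, fstar (g • x) = fstar x)
    (fbar : Ω → ℝ)
    (hfbar : ∀ x, fbar x = (Fintype.card G : ℝ)⁻¹ * ∑ g : G, f (g • x)) :
    (∫ x, (f x - fstar x) ^ 2 ∂μ) - (∫ x, (fbar x - fstar x) ^ 2 ∂μ) =
        ∫ x, (f x - fbar x) ^ 2 ∂μ ∧
      0 ≤ ∫ x, (f x - fbar x) ^ 2 ∂μ := by
  classical
  have hn : (0 : ℝ) < (Fintype.card G : ℝ) := by exact_mod_cast Fintype.card_pos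
  -- the action of g as a measurable equivalence
  let e : G → Ω ≃ᵐ Ω := fun g =>
    { toFun := fun x => g • x
      invFun := fun x => g⁻¹ • x
      left_inv := fun x => inv_smul_smul g x
      right_inv := fun x => smul_inv_smul g x
      measurable_toFun := (hact g).measurable
      measurable_invFun := (hact g⁻¹).measurable }
  have hfg : ∀ g : G, MemLp (fun x => f (g • x)) 2 μ := fun g =>
    hf.comp_measurePreserving (hact g)
  have hfbar_mem : MemLp fbar 2 μ := by
    have h1 : MemLp (fun x => ∑ g : G, f (g • x)) 2 μ :=
      memLp_finset_sum Finset.univ (fun g _ => hfg g)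
    have h2 := h1.const_mul ((Fintype.card G : ℝ)⁻¹)
    have hfe : fbar = fun x => (Fintype.card G : ℝ)⁻¹ * ∑ g : G, f (g • x) := funext hfbar
    rw [hfe]
    exact h2
  -- fbar is exactly G-invariant
  have hbar_inv : ∀ (g : G) (x : Ω), fbar (g • x) = fbar x := by
    intro g x
    rw [hfbar, hfbar]
    congr 1
    calc ∑ g' : G, f (g' • g • x) = ∑ g' : G, f ((g' * g) • x) := by
          simp [mul_smul]
      _ = ∑ h : G, f (h • x) := Fintype.sum_equiv (Equiv.mulRight g) _ _ (fun g' => rfl)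
  -- h := fbar - fstar is L² and a.e. invariant
  set h : Ω → ℝ := fun x => fbar x - fstar x with hh_def
  have hh : MemLp h 2 μ := hfbar_mem.sub hfstar
  have hh_inv : ∀ g : G, ∀ᵐ x ∂μ, h (g • x) = h x := by
    intro g
    filter_upwards [hinv g] with x hx
    simp [hh_def, hbar_inv g x, hx]
  -- products of L² functions are integrable
  have hmul : ∀ (u v : Ω → ℝ), MemLp u 2 μ → MemLp v 2 μ →
      Integrable (fun x => u x * v x) μ := by
    intro u v hu hv
    have : MemLp (u • v) 1 μ := hv.smul hu
    exact memLp_one_iff_integrable.mp this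
  -- key change of variables: ∫ f(g•x) h(x) = ∫ f h
  have key : ∀ g : G, ∫ x, f (g • x) * h x ∂μ = ∫ x, f x * h x ∂μ := by
    intro g
    have h1 : ∫ x, f (g • x) * h x ∂μ = ∫ x, f (g • x) * h (g • x) ∂μ := by
      apply integral_congr_ae
      filter_upwards [hh_inv g] with x hx
      rw [hx]
    have h2 : ∫ x, f (g • x) * h (g • x) ∂μ = ∫ x, f x * h x ∂μ :=
      (hact g).integral_comp (e g).measurableEmbedding (fun y => f y * h y)
    rw [h1, h2]
  -- cross term vanishes: ∫ (f - fbar) h = 0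
  have cross : ∫ x, (f x - fbar x) * h x ∂μ = 0 := by
    have hbarh : ∫ x, fbar x * h x ∂μ = ∫ x, f x * h x ∂μ := by
      have step : ∫ x, fbar x * h x ∂μ
          = (Fintype.card G : ℝ)⁻¹ * ∑ g : G, ∫ x, f (g • x) * h x ∂μ := by
        calc ∫ x, fbar x * h x ∂μ
            = ∫ x, ∑ g : G, (Fintype.card G : ℝ)⁻¹ * (f (g • x) * h x) ∂μ := by
              apply integral_congr_ae
              refine Filter.Eventually.of_forall fun x => ?_
              show fbar x * h x = ∑ g : G, (Fintype.card G : ℝ)⁻¹ * (f (g • x) * h x)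
              rw [hfbar x, ← Finset.mul_sum, ← Finset.sum_mul]
              ring
          _ = ∑ g : G, ∫ x, (Fintype.card G : ℝ)⁻¹ * (f (g • x) * h x) ∂μ :=
              integral_finset_sum Finset.univ
                (fun g _ => ((hmul _ _ (hfg g) hh).const_mul _))
          _ = ∑ g : G, (Fintype.card G : ℝ)⁻¹ * ∫ x, f (g • x) * h x ∂μ := by
              simp [integral_const_mul]
          _ = (Fintype.card G : ℝ)⁻¹ * ∑ g : G, ∫ x, f (g • x) * h x ∂μ := by
              rw [Finset.mul_sum]
      rw [step]
      simp only [key]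
      rw [Finset.sum_const, Finset.card_univ, nsmul_eq_mul, ← mul_assoc,
        inv_mul_cancel₀ (ne_of_gt hn), one_mul]
    have hsplit : ∫ x, (f x - fbar x) * h x ∂μ
        = (∫ x, f x * h x ∂μ) - ∫ x, fbar x * h x ∂μ := by
      rw [← integral_sub (hmul _ _ hf hh) (hmul _ _ hfbar_mem hh)]
      apply integral_congr_ae
      exact Filter.Eventually.of_forall fun x => by ring
    rw [hsplit, hbarh, sub_self]
  -- expand the square
  have ex : ∫ x, (f x - fstar x) ^ 2 ∂μ
      = (∫ x, (f x - fbar x) ^ 2 ∂μ) + 2 * (∫ x, (f x - fbar x) * h x ∂μ)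
        + ∫ x, h x ^ 2 ∂μ := by
    have hi1 : Integrable (fun x => (f x - fbar x) ^ 2) μ := (hf.sub hfbar_mem).integrable_sq
    have hi2 : Integrable (fun x => (f x - fbar x) * h x) μ := hmul _ _ (hf.sub hfbar_mem) hh
    have hi3 : Integrable (fun x => h x ^ 2) μ := hh.integrable_sq
    calc ∫ x, (f x - fstar x) ^ 2 ∂μ
        = ∫ x, ((f x - fbar x) ^ 2 + 2 * ((f x - fbar x) * h x) + h x ^ 2) ∂μ := by
          apply integral_congr_ae
          refine Filter.Eventually.of_forall fun x => ?_
          simp only [hh_def]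
          ring
      _ = (∫ x, ((f x - fbar x) ^ 2 + 2 * ((f x - fbar x) * h x)) ∂μ)
            + ∫ x, h x ^ 2 ∂μ := integral_add (hi1.add (hi2.const_mul 2)) hi3
      _ = ((∫ x, (f x - fbar x) ^ 2 ∂μ) + ∫ x, 2 * ((f x - fbar x) * h x) ∂μ)
            + ∫ x, h x ^ 2 ∂μ := by rw [integral_add hi1 (hi2.const_mul 2)]
      _ = (∫ x, (f x - fbar x) ^ 2 ∂μ) + 2 * (∫ x, (f x - fbar x) * h x ∂μ)
            + ∫ x, h x ^ 2 ∂μ := by rw [integral_const_mul]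
  have hhsq : ∫ x, h x ^ 2 ∂μ = ∫ x, (fbar x - fstar x) ^ 2 ∂μ := rfl
  have nonneg : 0 ≤ ∫ x, (f x - fbar x) ^ 2 ∂μ :=
    integral_nonneg fun x => sq_nonneg _
  refine ⟨?_, nonneg⟩
  rw [ex, cross, hhsq]
  ring
end

section
/- Let γ_c > 0 and g > max(1, γ_c). For all s, w > 0 there exists a unique κ > 0 satisfying 1 = γ_c·s/(s+κ) + (g−γ_c)·w/(w+κ), and this solution κ(s, w, g) is monotone nondecreasing in each of s, w, and g (over s, w > 0 and g > max(1, γ_c)). In particular, since σ̄ = (σ_c+σ_w)/2 ≤ σ_c and γ₀ ≤ γ, the effective regularization of data augmentation satisfies κ_inv = κ(σ̄, σ_w, γ₀) ≤ κ(σ_c, σ_w, γ) = κ. -/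
private lemma term_le {c d a b κ : ℝ} (hκ : 0 < κ) (ha : 0 < a) (hab : a ≤ b)
    (hc : 0 ≤ c) (hcd : c ≤ d) : c * a / (a + κ) ≤ d * b / (b + κ) := by
  rw [div_le_div_iff₀ (by linarith) (by linarith)]
  nlinarith [mul_nonneg (sub_nonneg.2 hcd) (sub_nonneg.2 hab),
    mul_nonneg (sub_nonneg.2 hcd) ha.le, mul_nonneg hc (sub_nonneg.2 hab)]

private lemma term_lt {c a κ κ' : ℝ} (hc : 0 < c) (ha : 0 < a) (hκ : 0 < κ)
    (h : κ < κ') : c * a / (a + κ') < c * a / (a + κ) := by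
  rw [div_lt_div_iff₀ (by linarith) (by linarith)]
  nlinarith [mul_pos hc ha]

/-- Fix `γ_c > 0`. For all `s, w > 0` and `g > max(1, γ_c)`
there is a unique `κ > 0` with `1 = γ_c·s/(s+κ) + (g−γ_c)·w/(w+κ)`, and this
solution is monotone nondecreasing in each of `s`, `w`, `g`. In particular,
since `σ̄ = (σ_c+σ_w)/2 ≤ σ_c` and `γ₀ ≤ γ`, the effective regularization of
data augmentation satisfies `κ_inv = κ(σ̄, σ_w, γ₀) ≤ κ(σ_c, σ_w, γ) = κ`. -/
theorem effective_ridge_exists_unique_and_monotone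
    (γc : ℝ) (hγc : 0 < γc) :
    (∀ s w g : ℝ, 0 < s → 0 < w → max 1 γc < g →
      ∃! κ : ℝ, 0 < κ ∧ γc * s / (s + κ) + (g - γc) * w / (w + κ) = 1) ∧
    (∀ s₁ s₂ w₁ w₂ g₁ g₂ κ₁ κ₂ : ℝ,
      0 < s₁ → s₁ ≤ s₂ → 0 < w₁ → w₁ ≤ w₂ → max 1 γc < g₁ → g₁ ≤ g₂ →
      0 < κ₁ → γc * s₁ / (s₁ + κ₁) + (g₁ - γc) * w₁ / (w₁ + κ₁) = 1 →
      0 < κ₂ → γc * s₂ / (s₂ + κ₂) + (g₂ - γc) * w₂ / (w₂ + κ₂) = 1 →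
      κ₁ ≤ κ₂) ∧
    (∀ σc σw γ₀ γ κinv κ : ℝ,
      0 < σw → σw ≤ σc → max 1 γc < γ₀ → γ₀ ≤ γ →
      0 < κinv →
      γc * ((σc + σw) / 2) / ((σc + σw) / 2 + κinv) +
        (γ₀ - γc) * σw / (σw + κinv) = 1 →
      0 < κ → γc * σc / (σc + κ) + (γ - γc) * σw / (σw + κ) = 1 →
      κinv ≤ κ) := by
  have mono : ∀ s₁ s₂ w₁ w₂ g₁ g₂ κ₁ κ₂ : ℝ,
      0 < s₁ → s₁ ≤ s₂ → 0 < w₁ → w₁ ≤ w₂ → max 1 γc < g₁ → g₁ ≤ g₂ →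
      0 < κ₁ → γc * s₁ / (s₁ + κ₁) + (g₁ - γc) * w₁ / (w₁ + κ₁) = 1 →
      0 < κ₂ → γc * s₂ / (s₂ + κ₂) + (g₂ - γc) * w₂ / (w₂ + κ₂) = 1 →
      κ₁ ≤ κ₂ := by
    intro s₁ s₂ w₁ w₂ g₁ g₂ κ₁ κ₂ hs₁ hs hw₁ hw hg₁ hg hκ₁ he₁ hκ₂ he₂
    by_contra hcon
    push_neg at hcon
    have hgc : γc < g₁ := lt_of_le_of_lt (le_max_right 1 γc) hg₁
    have h1 : γc * s₁ / (s₁ + κ₂) + (g₁ - γc) * w₁ / (w₁ + κ₂) ≤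
        γc * s₂ / (s₂ + κ₂) + (g₂ - γc) * w₂ / (w₂ + κ₂) :=
      add_le_add (term_le hκ₂ hs₁ hs hγc.le le_rfl)
        (term_le hκ₂ hw₁ hw (by linarith) (by linarith))
    have h2 : γc * s₁ / (s₁ + κ₁) + (g₁ - γc) * w₁ / (w₁ + κ₁) <
        γc * s₁ / (s₁ + κ₂) + (g₁ - γc) * w₁ / (w₁ + κ₂) :=
      add_lt_add (term_lt hγc hs₁ hκ₂ hcon) (term_lt (by linarith) hw₁ hκ₂ hcon)
    linarith
  refine ⟨?_, mono, ?_⟩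
  · intro s w g hs hw hg
    have hg1 : 1 < g := lt_of_le_of_lt (le_max_left 1 γc) hg
    have hgc : γc < g := lt_of_le_of_lt (le_max_right 1 γc) hg
    set b := s + w - γc * s - (g - γc) * w with hb
    set D := b ^ 2 + 4 * s * w * (g - 1) with hD
    have hDgt : b ^ 2 < D := by
      rw [hD]; nlinarith [mul_pos (mul_pos hs hw) (sub_pos.2 hg1)]
    have hDnn : 0 ≤ D := by nlinarith [sq_nonneg b]
    have hsq : Real.sqrt D ^ 2 = D := Real.sq_sqrt hDnn
    have habs : |b| < Real.sqrt D := by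
      rw [← Real.sqrt_sq_eq_abs]
      exact Real.sqrt_lt_sqrt (sq_nonneg b) hDgt
    have hsb : -b < Real.sqrt D := lt_of_le_of_lt (neg_le_abs b) habs
    have hbb : b < Real.sqrt D := lt_of_le_of_lt (le_abs_self b) habs
    set κ := (-b + Real.sqrt D) / 2 with hκdef
    have hκ : 0 < κ := by rw [hκdef]; linarith
    have hκb : 0 < κ + b := by rw [hκdef]; linarith
    have hquad : κ ^ 2 + b * κ + s * w * (1 - g) = 0 := by
      rw [hκdef]
      linear_combination hsq / 4 + hD / 4
    have h1 : s + κ ≠ 0 := by positivity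
    have h2 : w + κ ≠ 0 := by positivity
    have heq : γc * s / (s + κ) + (g - γc) * w / (w + κ) = 1 := by
      rw [div_add_div _ _ h1 h2, div_eq_one_iff_eq (mul_ne_zero h1 h2)]
      linear_combination -hquad + κ * hb
    refine ⟨κ, ⟨hκ, heq⟩, ?_⟩
    rintro κ' ⟨hκ', he'⟩
    have h1' : s + κ' ≠ 0 := by positivity
    have h2' : w + κ' ≠ 0 := by positivity
    rw [div_add_div _ _ h1' h2', div_eq_one_iff_eq (mul_ne_zero h1' h2')] at he'
    have hq' : κ' ^ 2 + b * κ' + s * w * (1 - g) = 0 := by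
      linear_combination -he' + κ' * hb
    have hfac : (κ' - κ) * (κ' + κ + b) = 0 := by linear_combination hq' - hquad
    rcases mul_eq_zero.1 hfac with h | h
    · linarith [sub_eq_zero.1 h]
    · linarith
  · intro σc σw γ₀ γ κinv κ hw hws hγ₀ hγ hκinv he1 hκ he2
    exact mono ((σc + σw) / 2) σc σw σw γ₀ γ κinv κ (by linarith) (by linarith)
      hw le_rfl hγ₀ hγ hκinv he1 hκ he2
end

section
/- Let 0 < γ_c < 1 and g > 1 (so g > γ_c), and fix s > 0. For each w > 0, let κ(w) denote the unique positive solution of 1 = γ_c·s/(s+κ) + (g−γ_c)·w/(w+κ). Then, as w → 0⁺, the quantity α(w) := γ_c·(s/(s+κ(w)))² + (g−γ_c)·(w/(w+κ(w)))² converges to γ_c + (1−γ_c)²/(g−γ_c). -/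
open Filter Set

/-- Let `0 < γ_c < 1`, `g > 1`, `s > 0`, and for `w > 0` let
`κ(w)` be the unique positive solution of
`1 = γ_c·s/(s+κ) + (g−γ_c)·w/(w+κ)`. Then, as `w → 0⁺`,
`α(w) = γ_c·(s/(s+κ(w)))² + (g−γ_c)·(w/(w+κ(w)))²` converges to
`γ_c + (1−γ_c)²/(g−γ_c)`. -/
theorem alpha_limit_strong_correlation
    (γc g s : ℝ) (hγc0 : 0 < γc) (hγc1 : γc < 1) (hg : 1 < g) (hs : 0 < s)
    (κ : ℝ → ℝ)
    (hκ : ∀ w : ℝ, 0 < w → 0 < κ w ∧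
      γc * s / (s + κ w) + (g - γc) * w / (w + κ w) = 1) :
    Tendsto
      (fun w : ℝ => γc * (s / (s + κ w)) ^ 2 + (g - γc) * (w / (w + κ w)) ^ 2)
      (nhdsWithin 0 (Set.Ioi 0))
      (nhds (γc + (1 - γc) ^ 2 / (g - γc))) := by
  have hgγ : 0 < g - γc := by linarith
  set c : ℝ := (1 - γc) / (g - γc) with hc
  have hc0 : 0 < c := div_pos (by linarith) hgγ
  have hc1 : c < 1 := (div_lt_one hgγ).2 (by linarith)
  set C : ℝ := (1 - c) / c with hCdef
  have hC0 : 0 < C := div_pos (by linarith) hc0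
  -- bound: for w > 0, κ w ≤ C * w
  have hbound : ∀ w : ℝ, 0 < w → κ w ≤ C * w := by
    intro w hw
    obtain ⟨hκpos, heq⟩ := hκ w hw
    have hsκ : 0 < s + κ w := by linarith
    have hwκ : 0 < w + κ w := by linarith
    -- first term < γc
    have h1 : γc * s / (s + κ w) < γc := by
      rw [div_lt_iff₀ hsκ]
      nlinarith
    have h2 : (1 - γc) < (g - γc) * w / (w + κ w) := by linarith
    rw [lt_div_iff₀ hwκ] at h2
    have h4 : c * (w + κ w) < w := by
      rw [hc, div_mul_eq_mul_div, div_lt_iff₀ hgγ]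
      nlinarith
    rw [hCdef, div_mul_eq_mul_div, le_div_iff₀ hc0]
    nlinarith
  -- κ → 0
  have hκ0 : Tendsto κ (nhdsWithin 0 (Set.Ioi 0)) (nhds 0) := by
    apply squeeze_zero'
    · filter_upwards [self_mem_nhdsWithin] with w hw
      exact (hκ w hw).1.le
    · filter_upwards [self_mem_nhdsWithin] with w hw
      exact hbound w hw
    · have : Tendsto (fun w : ℝ => C * w) (nhdsWithin 0 (Set.Ioi 0)) (nhds (C * 0)) :=
        ((continuous_const.mul continuous_id).tendsto 0).mono_left nhdsWithin_le_nhds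
      simpa using this
  -- u w := s/(s+κ w) → 1
  have hu : Tendsto (fun w => s / (s + κ w)) (nhdsWithin 0 (Set.Ioi 0)) (nhds 1) := by
    have hden : Tendsto (fun w => s + κ w) (nhdsWithin 0 (Set.Ioi 0)) (nhds s) := by
      simpa using tendsto_const_nhds.add hκ0
    have := (tendsto_const_nhds (x := s)).div hden hs.ne'
    simpa [div_self hs.ne', Pi.div_def] using this
  -- the target function equals g(u w) eventually, where
  -- g(u) = γc*u^2 + (g-γc)*((1-γc*u)/(g-γc))^2
  have hmain : Tendsto (fun w => γc * (s / (s + κ w)) ^ 2 +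
      (g - γc) * ((1 - γc * (s / (s + κ w))) / (g - γc)) ^ 2)
      (nhdsWithin 0 (Set.Ioi 0)) (nhds (γc + (1 - γc) ^ 2 / (g - γc))) := by
    have : Tendsto (fun u : ℝ => γc * u ^ 2 + (g - γc) * ((1 - γc * u) / (g - γc)) ^ 2)
        (nhds 1) (nhds (γc * 1 ^ 2 + (g - γc) * ((1 - γc * 1) / (g - γc)) ^ 2)) := by
      apply Continuous.tendsto
      continuity
    have h := this.comp hu
    convert h using 2
    · rfl
    field_simp
  apply hmain.congr'
  filter_upwards [self_mem_nhdsWithin] with w hw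
  have hw' : 0 < w := hw
  obtain ⟨hκpos, heq⟩ := hκ w hw'
  have hwκ : 0 < w + κ w := by linarith
  have hsκ : 0 < s + κ w := by linarith
  have hval : w / (w + κ w) = (1 - γc * (s / (s + κ w))) / (g - γc) := by
    field_simp at heq ⊢
    nlinarith [heq]
  rw [hval]
end

section
/- Let Σ be a real symmetric positive semidefinite d×d matrix, n a positive integer, and define T(κ) = (1/n)·Tr((Σ + κI)⁻¹Σ) for κ > 0. Then for every λ > 0 there exists a unique κ > 0 satisfying κ·(1 − T(κ)) = λ. -/
open Matrix

lemma trace_resolvent {d : ℕ} (S : Matrix (Fin d) (Fin d) ℝ) (hS : S.PosSemidef)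
    (κ : ℝ) (hκ : 0 < κ) :
    Matrix.trace ((S + κ • (1 : Matrix (Fin d) (Fin d) ℝ))⁻¹ * S)
      = ∑ i, hS.1.eigenvalues i / (hS.1.eigenvalues i + κ) := by
  set U : Matrix (Fin d) (Fin d) ℝ := (hS.1.eigenvectorUnitary : Matrix (Fin d) (Fin d) ℝ) with hU
  set μ : Fin d → ℝ := hS.1.eigenvalues with hμ
  have hU2 : star U * U = 1 := (Matrix.mem_unitaryGroup_iff').mp hS.1.eigenvectorUnitary.2
  have hU1 : U * star U = 1 := (Matrix.mem_unitaryGroup_iff).mp hS.1.eigenvectorUnitary.2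
  have hpos : ∀ i, 0 < μ i + κ := fun i => by
    have := hS.eigenvalues_nonneg i; linarith
  have hSpec : S = U * diagonal μ * star U := by
    have := hS.1.spectral_theorem
    simpa using this
  have hAdd : S + κ • (1 : Matrix (Fin d) (Fin d) ℝ)
      = U * diagonal (fun i => μ i + κ) * star U := by
    have h1 : κ • (1 : Matrix (Fin d) (Fin d) ℝ) = U * diagonal (fun _ => κ) * star U := by
      rw [← Matrix.smul_one_eq_diagonal, Matrix.mul_smul, Matrix.smul_mul, mul_one, hU1]
    rw [hSpec, h1, show (Matrix.diagonal fun i => μ i + κ) = Matrix.diagonal μ + Matrix.diagonal (fun _ => κ) from by rw [diagonal_add]]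
    noncomm_ring
  have hinv : (S + κ • (1 : Matrix (Fin d) (Fin d) ℝ))⁻¹
      = U * diagonal (fun i => (μ i + κ)⁻¹) * star U := by
    rw [hAdd]
    apply Matrix.inv_eq_right_inv
    calc U * diagonal (fun i => μ i + κ) * star U * (U * diagonal (fun i => (μ i + κ)⁻¹) * star U)
        = U * (diagonal (fun i => μ i + κ) * (star U * U) * diagonal (fun i => (μ i + κ)⁻¹)) * star U := by
          noncomm_ring
      _ = 1 := by
          rw [hU2, mul_one, diagonal_mul_diagonal]
          have : (fun i => (μ i + κ) * (μ i + κ)⁻¹) = fun _ => (1:ℝ) := by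
            funext i; exact mul_inv_cancel₀ (hpos i).ne'
          rw [this, diagonal_one, mul_one, hU1]
  rw [hinv, hSpec]
  have : U * diagonal (fun i => (μ i + κ)⁻¹) * star U * (U * diagonal μ * star U)
      = U * (diagonal (fun i => (μ i + κ)⁻¹) * diagonal μ) * star U := by
    calc U * diagonal (fun i => (μ i + κ)⁻¹) * star U * (U * diagonal μ * star U)
        = U * (diagonal (fun i => (μ i + κ)⁻¹) * (star U * U) * diagonal μ) * star U := by
          noncomm_ring
      _ = _ := by rw [hU2, mul_one]
  rw [this, Matrix.trace_mul_cycle, ← Matrix.mul_assoc, hU2, Matrix.one_mul,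
    diagonal_mul_diagonal, trace_diagonal]
  congr 1; funext i
  rw [inv_mul_eq_div]

/-- Let `Σ` be a real symmetric PSD `d×d` matrix, `n` a
positive integer, and `T(κ) = (1/n)·Tr((Σ + κI)⁻¹Σ)`. Then for every `λ > 0`
there exists a unique `κ > 0` with `κ·(1 − T(κ)) = λ` (the self-consistent
equation defining the effective ridge parameter). -/
theorem effective_ridge_fixed_point_exists_unique {d : ℕ}
    (S : Matrix (Fin d) (Fin d) ℝ) (hS : S.PosSemidef)
    (n : ℕ) (hn : 0 < n) (lam : ℝ) (hlam : 0 < lam) :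
    ∃! κ : ℝ, 0 < κ ∧
      κ * (1 - (1 / (n : ℝ)) *
        Matrix.trace ((S + κ • (1 : Matrix (Fin d) (Fin d) ℝ))⁻¹ * S)) = lam := by
  classical
  set μ : Fin d → ℝ := hS.1.eigenvalues with hμ
  have hnn : ∀ i, 0 ≤ μ i := hS.eigenvalues_nonneg
  have hnR : (0:ℝ) < n := by exact_mod_cast hn
  set g : ℝ → ℝ := fun κ => 1 - lam/κ - (1/(n:ℝ)) * ∑ i, μ i/(μ i + κ) with hg
  have key : ∀ κ : ℝ, 0 < κ →
      ((κ * (1 - (1/(n:ℝ)) *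
        Matrix.trace ((S + κ • (1 : Matrix (Fin d) (Fin d) ℝ))⁻¹ * S)) = lam) ↔ g κ = 0) := by
    intro κ hκ
    rw [trace_resolvent S hS κ hκ]
    have hmul : κ * g κ = κ * (1 - (1/(n:ℝ)) * ∑ i, μ i/(μ i + κ)) - lam := by
      simp only [hg]
      field_simp
      ring
    constructor
    · intro h
      have : κ * g κ = 0 := by rw [hmul, h]; ring
      rcases mul_eq_zero.mp this with h' | h'
      · exact absurd h' hκ.ne'
      · exact h'
    · intro h
      have : κ * g κ = 0 := by rw [h]; ring
      rw [hmul] at this; linarith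
  have hmono : StrictMonoOn g (Set.Ioi 0) := by
    intro a ha b hb hab
    simp only [Set.mem_Ioi] at ha hb
    have h1 : lam / b < lam / a := by
      apply div_lt_div_of_pos_left hlam ha hab
    have h2 : ∑ i, μ i/(μ i + b) ≤ ∑ i, μ i/(μ i + a) := by
      apply Finset.sum_le_sum
      intro i _
      gcongr <;> linarith [hnn i]
    have h3 : (1/(n:ℝ)) * ∑ i, μ i/(μ i + b) ≤ (1/(n:ℝ)) * ∑ i, μ i/(μ i + a) := by
      apply mul_le_mul_of_nonneg_left h2
      positivity
    simp only [hg]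
    linarith
  set K : ℝ := 2*(lam + ∑ i, μ i) with hK
  have hsum_nn : (0:ℝ) ≤ ∑ i, μ i := Finset.sum_nonneg fun i _ => hnn i
  have hKpos : 0 < K := by simp only [hK]; linarith
  have hab : lam/2 ≤ K := by simp only [hK]; linarith
  have hgb : 0 < g K := by
    have hb1 : ∀ i, μ i/(μ i + K) ≤ μ i / K := by
      intro i
      gcongr
      · exact hnn i
      · linarith [hnn i]
    have hb2 : ∑ i, μ i/(μ i + K) ≤ (∑ i, μ i) / K := by
      rw [Finset.sum_div]
      exact Finset.sum_le_sum fun i _ => hb1 i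
    have hb3 : (1/(n:ℝ)) * ∑ i, μ i/(μ i + K) ≤ (∑ i, μ i) / K := by
      have hn1 : (1:ℝ) ≤ n := by exact_mod_cast hn
      have hsnn : 0 ≤ ∑ i, μ i/(μ i + K) :=
        Finset.sum_nonneg fun i _ => div_nonneg (hnn i) (by linarith [hnn i])
      calc (1/(n:ℝ)) * ∑ i, μ i/(μ i + K) ≤ 1 * ∑ i, μ i/(μ i + K) := by
            apply mul_le_mul_of_nonneg_right _ hsnn
            rw [div_le_one hnR]; exact hn1
        _ ≤ (∑ i, μ i) / K := by rw [one_mul]; exact hb2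
    have hlamK : lam / K + (∑ i, μ i)/K = 1/2 := by
      rw [← add_div, hK]
      field_simp
    simp only [hg]
    have : lam / K + (1/(n:ℝ)) * ∑ i, μ i/(μ i + K) ≤ 1/2 := by
      rw [← hlamK]; linarith
    linarith
  have hga : g (lam/2) < 0 := by
    have h1 : lam / (lam/2) = 2 := by field_simp
    have h2 : 0 ≤ (1/(n:ℝ)) * ∑ i, μ i/(μ i + lam/2) := by
      apply mul_nonneg (by positivity)
      exact Finset.sum_nonneg fun i _ => div_nonneg (hnn i) (by linarith [hnn i])
    simp only [hg, h1]
    linarith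
  have hcont : ContinuousOn g (Set.Icc (lam/2) K) := by
    apply ContinuousOn.sub
    apply ContinuousOn.sub continuousOn_const
    · apply ContinuousOn.div continuousOn_const continuousOn_id
      intro x hx
      have := hx.1
      simp only [id]
      linarith
    · apply ContinuousOn.mul continuousOn_const
      apply continuousOn_finset_sum
      intro i _
      apply ContinuousOn.div continuousOn_const
      · exact (continuousOn_const.add continuousOn_id)
      · intro x hx
        have h1 := hx.1
        have h2 := hnn i
        intro hc
        nlinarith
  have hmem : (0:ℝ) ∈ Set.Icc (g (lam/2)) (g K) := ⟨le_of_lt hga, le_of_lt hgb⟩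
  obtain ⟨c, hc, hgc⟩ := intermediate_value_Icc hab hcont hmem
  have hcpos : 0 < c := lt_of_lt_of_le (by linarith) hc.1
  refine ⟨c, ⟨hcpos, (key c hcpos).mpr hgc⟩, ?_⟩
  rintro y ⟨hy, hyeq⟩
  have hgy : g y = 0 := (key y hy).mp hyeq
  exact hmono.injOn (Set.mem_Ioi.mpr hy) (Set.mem_Ioi.mpr hcpos) (by rw [hgy, hgc])
end

section
/- Let Σ be a real symmetric positive semidefinite d×d matrix, n a positive integer, and λ₀ > 0. Suppose κ : (0, ∞) → (0, ∞) is differentiable at λ₀ and satisfies the fixed-point equation κ(λ)·(1 − (1/n)Tr((Σ + κ(λ)I)⁻¹Σ)) = λ for all λ in a neighborhood of λ₀. Then κ'(λ₀)·(1 − α) = 1, where α = (1/n)·Tr((Σ + κ(λ₀)I)⁻² Σ²); equivalently κ'(λ₀) = 1/(1−α) whenever α ≠ 1. -/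
open Matrix Filter

lemma trace_key {d : ℕ} (S : Matrix (Fin d) (Fin d) ℝ) (hS : S.PosSemidef)
    {x : ℝ} (hx : 0 < x) :
    Matrix.trace ((S + x • (1 : Matrix (Fin d) (Fin d) ℝ))⁻¹ * S)
      = ∑ i, hS.1.eigenvalues i / (hS.1.eigenvalues i + x) ∧
    Matrix.trace ((S + x • (1 : Matrix (Fin d) (Fin d) ℝ))⁻¹ *
        (S + x • (1 : Matrix (Fin d) (Fin d) ℝ))⁻¹ * (S * S))
      = ∑ i, (hS.1.eigenvalues i)^2 / (hS.1.eigenvalues i + x)^2 := by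
  have hH := hS.1
  set μ := hH.eigenvalues with hμ
  set U : Matrix (Fin d) (Fin d) ℝ := (hH.eigenvectorUnitary : Matrix (Fin d) (Fin d) ℝ) with hUdef
  have hU1 : U * star U = 1 := Matrix.mem_unitaryGroup_iff.mp hH.eigenvectorUnitary.2
  have hU2 : star U * U = 1 := Matrix.mem_unitaryGroup_iff'.mp hH.eigenvectorUnitary.2
  have hspec : S = U * diagonal μ * star U := by
    have h := hH.spectral_theorem
    simpa using h
  have hpos : ∀ i, 0 < μ i + x := fun i => by
    have := hS.eigenvalues_nonneg i; linarith
  have hconj_mul : ∀ A B : Matrix (Fin d) (Fin d) ℝ,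
      (U * A * star U) * (U * B * star U) = U * (A * B) * star U := by
    intro A B
    calc (U * A * star U) * (U * B * star U)
        = U * A * ((star U * U) * (B * star U)) := by
          simp only [Matrix.mul_assoc]
      _ = U * (A * B) * star U := by
          rw [hU2, Matrix.one_mul]; simp only [Matrix.mul_assoc]
  have hconj_trace : ∀ A : Matrix (Fin d) (Fin d) ℝ,
      Matrix.trace (U * A * star U) = Matrix.trace A := by
    intro A
    rw [trace_mul_cycle, hU2, Matrix.one_mul]
  have hsum : S + x • (1 : Matrix (Fin d) (Fin d) ℝ)
      = U * diagonal (fun i => μ i + x) * star U := by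
    have h1 : (diagonal (fun i => μ i + x) : Matrix (Fin d) (Fin d) ℝ)
        = diagonal μ + x • 1 := by
      rw [smul_one_eq_diagonal, ← diagonal_add]
    rw [h1, Matrix.mul_add, Matrix.add_mul, ← hspec,
      mul_smul_comm, Matrix.mul_one, smul_mul_assoc, hU1]
  have hinv : (S + x • (1 : Matrix (Fin d) (Fin d) ℝ))⁻¹
      = U * diagonal (fun i => (μ i + x)⁻¹) * star U := by
    apply Matrix.inv_eq_right_inv
    rw [hsum, hconj_mul, diagonal_mul_diagonal]
    have : (fun i => (μ i + x) * (μ i + x)⁻¹) = fun _ => (1:ℝ) := by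
      funext i; exact mul_inv_cancel₀ (hpos i).ne'
    rw [this, diagonal_one, Matrix.mul_one, hU1]
  constructor
  · rw [hinv]
    conv_lhs => rw [hspec]
    rw [hconj_mul, hconj_trace, diagonal_mul_diagonal, trace_diagonal]
    exact Finset.sum_congr rfl fun i _ => by rw [div_eq_inv_mul]
  · rw [hinv]
    conv_lhs => rw [hspec]
    rw [hconj_mul, hconj_mul, hconj_mul, hconj_trace,
      diagonal_mul_diagonal, diagonal_mul_diagonal, diagonal_mul_diagonal, trace_diagonal]
    refine Finset.sum_congr rfl fun i _ => ?_
    field_simp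

/-- Let `Σ` be symmetric PSD, `n` a positive integer,
`λ₀ > 0`, and suppose `κ : (0,∞) → (0,∞)` is differentiable at `λ₀` and
satisfies the fixed-point equation `κ(λ)(1 − (1/n)Tr((Σ + κ(λ)I)⁻¹Σ)) = λ`
near `λ₀`. Then `κ'(λ₀)·(1 − α) = 1` where
`α = (1/n)Tr((Σ + κ(λ₀)I)⁻²Σ²)`; equivalently `κ'(λ₀) = 1/(1−α)` whenever
`α ≠ 1`. -/
theorem effective_ridge_derivative {d : ℕ}
    (S : Matrix (Fin d) (Fin d) ℝ) (hS : S.PosSemidef)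
    (n : ℕ) (hn : 0 < n) (lam₀ : ℝ) (hlam₀ : 0 < lam₀)
    (κ : ℝ → ℝ) (hκpos : ∀ lam : ℝ, 0 < lam → 0 < κ lam)
    (hκdiff : DifferentiableAt ℝ κ lam₀)
    (hfix : ∀ᶠ lam in nhds lam₀,
      κ lam * (1 - (1 / (n : ℝ)) *
        Matrix.trace ((S + κ lam • (1 : Matrix (Fin d) (Fin d) ℝ))⁻¹ * S)) = lam) :
    deriv κ lam₀ *
        (1 - (1 / (n : ℝ)) *
          Matrix.trace ((S + κ lam₀ • (1 : Matrix (Fin d) (Fin d) ℝ))⁻¹ *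
            (S + κ lam₀ • (1 : Matrix (Fin d) (Fin d) ℝ))⁻¹ * (S * S))) = 1 ∧
      ((1 / (n : ℝ)) *
          Matrix.trace ((S + κ lam₀ • (1 : Matrix (Fin d) (Fin d) ℝ))⁻¹ *
            (S + κ lam₀ • (1 : Matrix (Fin d) (Fin d) ℝ))⁻¹ * (S * S)) ≠ 1 →
        deriv κ lam₀ =
          1 / (1 - (1 / (n : ℝ)) *
            Matrix.trace ((S + κ lam₀ • (1 : Matrix (Fin d) (Fin d) ℝ))⁻¹ *
              (S + κ lam₀ • (1 : Matrix (Fin d) (Fin d) ℝ))⁻¹ * (S * S)))) := by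
  have hH := hS.1
  set μ := hH.eigenvalues with hμ
  set κ₀ := κ lam₀ with hκ₀def
  have hκ₀ : 0 < κ₀ := hκpos lam₀ hlam₀
  have hμnn : ∀ i, 0 ≤ μ i := fun i => hS.eigenvalues_nonneg i
  -- scalar function h
  set h : ℝ → ℝ := fun x => x * (1 - (1 / (n : ℝ)) * ∑ i, μ i / (μ i + x)) with hhdef
  -- h ∘ κ = id near lam₀
  have heq : ∀ᶠ lam in nhds lam₀, h (κ lam) = lam := by
    filter_upwards [hfix, eventually_gt_nhds hlam₀] with lam hfl hlpos
    have hκl : 0 < κ lam := hκpos lam hlpos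
    rw [hhdef]
    simp only
    rw [← (trace_key S hS hκl).1]
    exact hfl
  -- derivative of h at κ₀
  have hpos : ∀ i, 0 < μ i + κ₀ := fun i => by have := hμnn i; linarith
  have hterm : ∀ i : Fin d, HasDerivAt (fun x : ℝ => μ i / (μ i + x))
      (-(μ i / (μ i + κ₀)^2)) κ₀ := by
    intro i
    have h1 : HasDerivAt (fun x : ℝ => μ i + x) 1 κ₀ :=
      (hasDerivAt_id κ₀).const_add (μ i)
    have := (hasDerivAt_const κ₀ (μ i)).fun_div h1 (hpos i).ne'
    refine this.congr_deriv ?_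
    field_simp
    ring
  have hsumderiv : HasDerivAt (fun x : ℝ => ∑ i, μ i / (μ i + x))
      (∑ i, -(μ i / (μ i + κ₀)^2)) κ₀ := HasDerivAt.fun_sum fun i _ => hterm i
  have hhderiv : HasDerivAt h
      (1 - (1 / (n : ℝ)) * ∑ i, (μ i)^2 / (μ i + κ₀)^2) κ₀ := by
    have h2 : HasDerivAt (fun x : ℝ => 1 - (1 / (n : ℝ)) * ∑ i, μ i / (μ i + x))
        (-((1 / (n : ℝ)) * ∑ i, -(μ i / (μ i + κ₀)^2))) κ₀ :=
      ((hsumderiv.const_mul ((1:ℝ)/n)).const_sub 1)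
    have h3 := (hasDerivAt_id κ₀).fun_mul h2
    refine h3.congr_deriv ?_
    have hrw : ∀ i : Fin d, (μ i)^2 / (μ i + κ₀)^2
        = μ i / (μ i + κ₀) - κ₀ * (μ i / (μ i + κ₀)^2) := by
      intro i
      have hne : μ i + κ₀ ≠ 0 := (hpos i).ne'
      field_simp
      ring
    simp only [hrw, Finset.sum_sub_distrib, ← Finset.mul_sum, Finset.sum_neg_distrib,
      div_eq_mul_inv, id_eq]
    ring
  -- chain rule
  have hκd : HasDerivAt κ (deriv κ lam₀) lam₀ := hκdiff.hasDerivAt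
  have hcomp : HasDerivAt (h ∘ κ)
      ((1 - (1 / (n : ℝ)) * ∑ i, (μ i)^2 / (μ i + κ₀)^2) * deriv κ lam₀) lam₀ :=
    hhderiv.comp lam₀ hκd
  have hid : HasDerivAt (h ∘ κ) 1 lam₀ := by
    have : HasDerivAt (fun lam : ℝ => lam) 1 lam₀ := hasDerivAt_id lam₀
    exact this.congr_of_eventuallyEq (heq.mono fun lam hl => hl)
  have hmain : (1 - (1 / (n : ℝ)) * ∑ i, (μ i)^2 / (μ i + κ₀)^2) * deriv κ lam₀ = 1 :=
    hcomp.unique hid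
  have htr := (trace_key S hS hκ₀).2
  rw [htr]
  constructor
  · linarith [hmain, mul_comm (deriv κ lam₀) (1 - (1 / (n : ℝ)) * ∑ i, (μ i)^2 / (μ i + κ₀)^2)]
  · intro hne
    have h1 : (1 : ℝ) - (1 / (n : ℝ)) * ∑ i, (μ i)^2 / (μ i + κ₀)^2 ≠ 0 := by
      intro hc
      apply hne
      linarith
    rw [eq_div_iff h1]
    linarith [hmain, mul_comm (deriv κ lam₀) (1 - (1 / (n : ℝ)) * ∑ i, (μ i)^2 / (μ i + κ₀)^2)]
end
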